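/- arXiv:1507.08091 — 3 statements merged into one kernel-verified Lean document; each statement's English description precedes it below -/
import Mathlib

section
/- For any real r > 1, there exist only finitely many positive integers j such that ∏_{k > j} 1/(1 - p_k^{-r}) < 1 + p_j^{-r}, where p_k denotes the k-th prime. -/
/-!
Each factor satisfies `(1 - x)⁻¹ ≥ 1 + x`, so the tail product is at least
`1 + ∑_{k > j} p_k^{-r}`, and it suffices that this tail sum exceeds `P^{-r}`, `P = p_j`, for
large `j`. Chebyshev's bound `π(x) ≫ x / log x` gives `π(P^{1 + 1/r}) ≥ 2P` for large `P`, so the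
`P` primes following `P` are all at most `P^{1 + 1/r}`; each contributes at least `P^{-r-1}`,
together at least `P^{-r}`.
-/

noncomputable def tailProd (r : ℝ) (j : ℕ) : ℝ :=
  ∏' i : ℕ, (1 - (Nat.nth Nat.Prime (j + i) : ℝ) ^ (-r))⁻¹

open Filter Finset

theorem Finset.one_add_sum_le_prod_one_add {ι R : Type*} [CommSemiring R] [PartialOrder R]
    [IsOrderedRing R] (s : Finset ι) {f : ι → R} (hf : ∀ i ∈ s, 0 ≤ f i) :
    1 + ∑ i ∈ s, f i ≤ ∏ i ∈ s, (1 + f i) := by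
  classical
  induction s using Finset.induction_on with
  | empty => simp
  | insert a s ha ih =>
    rw [sum_insert ha, prod_insert ha]
    have hfa : 0 ≤ f a := hf a (mem_insert_self a s)
    have hfs : ∀ i ∈ s, 0 ≤ f i := fun i hi => hf i (mem_insert_of_mem hi)
    calc 1 + (f a + ∑ i ∈ s, f i)
        ≤ 1 + (f a + ∑ i ∈ s, f i) + f a * ∑ i ∈ s, f i :=
          le_add_of_nonneg_right (mul_nonneg hfa (sum_nonneg hfs))
      _ = (1 + f a) * (1 + ∑ i ∈ s, f i) := by ring
      _ ≤ (1 + f a) * ∏ i ∈ s, (1 + f i) :=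
          mul_le_mul_of_nonneg_left (ih hfs) (add_nonneg zero_le_one hfa)

theorem Multipliable.prod_le_tprod_of_one_le {ι R : Type*} [CommSemiring R] [PartialOrder R]
    [IsOrderedRing R] [TopologicalSpace R] [OrderClosedTopology R] {f : ι → R}
    (hf : Multipliable f) (h : ∀ i, 1 ≤ f i) (s : Finset ι) : ∏ i ∈ s, f i ≤ ∏' i, f i :=
  ge_of_tendsto hf.hasProd <| (eventually_ge_atTop s).mono fun _t hst =>
    prod_le_prod_of_subset_of_one_le hst (fun i _ => zero_le_one.trans (h i)) fun i _ _ => h i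

namespace Real

variable {ι : Type*}

theorem one_add_le_inv_one_sub {x : ℝ} (hx : x < 1) : 1 + x ≤ (1 - x)⁻¹ := by
  rw [← one_div, le_div_iff₀ (sub_pos.mpr hx)]
  nlinarith [sq_nonneg x]

theorem multipliable_inv_one_sub {f : ι → ℝ} (hf : Summable f) :
    Multipliable fun i => (1 - f i)⁻¹ := by
  have hsmall : ∀ᶠ i in cofinite, |f i| ≤ 1 / 2 :=
    hf.abs.tendsto_cofinite_zero.eventually_le_const (by norm_num)
  have hsub : Summable fun i => (1 - f i)⁻¹ - 1 := by
    refine (hf.abs.mul_left 2).of_norm_bounded_eventually (hsmall.mono fun i hi => ?_)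
    have hpos : 0 < 1 - f i := by linarith [le_abs_self (f i)]
    have hquot : (1 - f i)⁻¹ - 1 = f i / (1 - f i) := by field_simp; ring
    rw [hquot, norm_div, norm_of_nonneg hpos.le, Real.norm_eq_abs, div_le_iff₀ hpos]
    nlinarith [abs_nonneg (f i), le_abs_self (f i)]
  simpa using Real.multipliable_one_add_of_summable hsub

theorem one_add_tsum_le_tprod_inv_one_sub {f : ι → ℝ} (hf : Summable f) (h0 : ∀ i, 0 ≤ f i)
    (h1 : ∀ i, f i < 1) : 1 + ∑' i, f i ≤ ∏' i, (1 - f i)⁻¹ := by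
  rw [← le_sub_iff_add_le']
  refine hf.tsum_le_of_sum_le fun s => le_sub_iff_add_le'.mpr ?_
  calc 1 + ∑ i ∈ s, f i ≤ ∏ i ∈ s, (1 + f i) := s.one_add_sum_le_prod_one_add fun i _ => h0 i
    _ ≤ ∏ i ∈ s, (1 - f i)⁻¹ :=
        prod_le_prod (fun i _ => by linarith [h0 i]) fun i _ => one_add_le_inv_one_sub (h1 i)
    _ ≤ ∏' i, (1 - f i)⁻¹ := (multipliable_inv_one_sub hf).prod_le_tprod_of_one_le (fun i =>
        (le_add_of_nonneg_right (h0 i)).trans (one_add_le_inv_one_sub (h1 i))) s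

end Real

open Asymptotics in
theorem Chebyshev.eventually_mul_rpow_le_primeCounting {θ : ℝ} (hθ : θ < 1) (c : ℝ) :
    ∀ᶠ x : ℝ in atTop, c * x ^ θ ≤ Nat.primeCounting ⌊x⌋₊ := by
  have hpow : (fun x : ℝ => x ^ θ * Real.log x) =o[atTop] id := by
    refine ((isBigO_refl (fun x : ℝ => x ^ θ) atTop).mul_isLittleO
      (isLittleO_log_rpow_atTop (sub_pos.mpr hθ))).congr' .rfl ?_
    filter_upwards [eventually_gt_atTop 0] with x hx
    rw [← Real.rpow_add hx, add_sub_cancel, Real.rpow_one, id]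
  have hshift : (fun x : ℝ => Real.log (x + 2)) =o[atTop] id :=
    (Real.isLittleO_log_id_atTop.comp_tendsto
      (tendsto_atTop_add_const_right _ 2 tendsto_id)).trans_isBigO
        ((isBigO_refl _ _).add (isLittleO_const_id_atTop 2).isBigO)
  -- the error terms in Chebyshev's `(x - 1) log 2 - log (x + 2) ≤ ψ x ≤ π ⌊x⌋ · log x`
  have hlo : (fun x : ℝ => c * (x ^ θ * Real.log x) + Real.log 2 + Real.log (x + 2))
      =o[atTop] id :=
    ((hpow.const_mul_left c).add (isLittleO_const_id_atTop _)).add hshift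
  filter_upwards [hlo.bound (Real.log_pos one_lt_two), eventually_gt_atTop 1] with x hx hx1
  have hlog := Real.log_pos hx1
  have hψ := (Chebyshev.psi_ge' (by linarith)).trans (Chebyshev.psi_le_primeCounting_mul_log' x)
  rw [Real.norm_eq_abs, id, Real.norm_of_nonneg (by linarith)] at hx
  rw [← mul_le_mul_iff_of_pos_right hlog]
  linarith [le_abs_self (c * (x ^ θ * Real.log x) + Real.log 2 + Real.log (x + 2))]

namespace Nat

theorem summable_nth_prime_rpow {s : ℝ} (hs : s < -1) :
    Summable fun n => (nth Nat.Prime n : ℝ) ^ s := by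
  have hinj : Function.Injective fun n => (⟨nth Nat.Prime n, prime_nth_prime n⟩ : Primes) :=
    fun _ _ h => nth_injective infinite_setOfPred_prime (congrArg Subtype.val h)
  exact ((Primes.summable_rpow.mpr hs).comp_injective hinj).congr fun _ => rfl

theorem eventually_nth_prime_add_self_le_rpow {a : ℝ} (ha : 1 < a) :
    ∀ᶠ m in atTop, (nth Nat.Prime (m + nth Nat.Prime m) : ℝ) ≤ (nth Nat.Prime m : ℝ) ^ a := by
  have hP : Tendsto (fun m => (nth Nat.Prime m : ℝ)) atTop atTop :=
    tendsto_natCast_atTop_atTop.comp (nth_strictMono infinite_setOfPred_prime).tendsto_atTop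
  filter_upwards [hP.eventually <| (tendsto_rpow_atTop (by linarith)).eventually <|
    Chebyshev.eventually_mul_rpow_le_primeCounting (inv_lt_one_of_one_lt₀ ha) 2] with m hm
  set P := nth Nat.Prime m
  rw [Real.rpow_rpow_inv (Nat.cast_nonneg P) (by linarith)] at hm
  have hmP : m < P := (add_two_le_nth_prime m).trans_lt' (by omega)
  have hcount : m + P < count Nat.Prime (⌊(P : ℝ) ^ a⌋₊ + 1) := by
    have : 2 * P ≤ primeCounting ⌊(P : ℝ) ^ a⌋₊ := by exact_mod_cast hm
    exact (by omega : m + P < 2 * P).trans_le this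
  calc (nth Nat.Prime (m + P) : ℝ) ≤ ⌊(P : ℝ) ^ a⌋₊ := by
        exact_mod_cast Nat.lt_succ_iff.mp (nth_lt_of_lt_count hcount)
    _ ≤ (P : ℝ) ^ a := Nat.floor_le (by positivity)

theorem eventually_rpow_neg_nth_prime_le_tsum {r : ℝ} (hr : 1 < r) :
    ∀ᶠ m in atTop, (nth Nat.Prime m : ℝ) ^ (-r) ≤ ∑' i, (nth Nat.Prime (m + 1 + i) : ℝ) ^ (-r) := by
  have hr0 : 0 < r := by linarith
  filter_upwards [eventually_nth_prime_add_self_le_rpow (a := 1 + r⁻¹) (by simp [hr0])] with m hm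
  set P := nth Nat.Prime m
  have hP : (0 : ℝ) < P := by exact_mod_cast (prime_nth_prime m).pos
  have hpos : ∀ k, (0 : ℝ) < nth Nat.Prime k := fun k => by exact_mod_cast (prime_nth_prime k).pos
  calc (P : ℝ) ^ (-r) = P * ((P : ℝ) ^ (1 + r⁻¹)) ^ (-r) := by
        rw [← Real.rpow_mul hP.le, show (1 + r⁻¹) * -r = -r - 1 by field_simp; ring,
          Real.rpow_sub_one hP.ne', mul_div_cancel₀ _ hP.ne']
    _ ≤ P * (nth Nat.Prime (m + P) : ℝ) ^ (-r) :=
        mul_le_mul_of_nonneg_left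
          (Real.rpow_le_rpow_of_nonpos (hpos _) hm (by linarith)) hP.le
    _ = ∑ i ∈ range P, (nth Nat.Prime (m + P) : ℝ) ^ (-r) := by simp
    _ ≤ ∑ i ∈ range P, (nth Nat.Prime (m + 1 + i) : ℝ) ^ (-r) := by
        refine sum_le_sum fun i hi => Real.rpow_le_rpow_of_nonpos (hpos _) ?_ (by linarith)
        exact_mod_cast (nth_strictMono infinite_setOfPred_prime).monotone (by simp at hi; omega)
    _ ≤ ∑' i, (nth Nat.Prime (m + 1 + i) : ℝ) ^ (-r) :=
        ((summable_nth_prime_rpow (neg_lt_neg hr)).comp_injective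
          (add_right_injective _)).sum_le_tsum _ fun i _ => by positivity

end Nat

theorem stmt6 (r : ℝ) (hr : 1 < r) :
    {j : ℕ | 0 < j ∧ tailProd r j < 1 + (Nat.nth Nat.Prime (j - 1) : ℝ) ^ (-r)}.Finite := by
  have hlarge : ∀ᶠ j in atTop, 1 + (Nat.nth Nat.Prime (j - 1) : ℝ) ^ (-r) ≤ tailProd r j := by
    filter_upwards [(tendsto_sub_atTop_nat 1).eventually
      (Nat.eventually_rpow_neg_nth_prime_le_tsum hr), eventually_ge_atTop 1] with j hj hj1
    rw [Nat.sub_add_cancel hj1] at hj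
    have hgt : ∀ i, 1 < (Nat.nth Nat.Prime (j + i) : ℝ) := fun i => by
      exact_mod_cast (Nat.prime_nth_prime _).one_lt
    calc 1 + (Nat.nth Nat.Prime (j - 1) : ℝ) ^ (-r)
        ≤ 1 + ∑' i, (Nat.nth Nat.Prime (j + i) : ℝ) ^ (-r) := by gcongr
      _ ≤ tailProd r j := Real.one_add_tsum_le_tprod_inv_one_sub
          ((Nat.summable_nth_prime_rpow (neg_lt_neg hr)).comp_injective (add_right_injective j))
          (fun i => by positivity) fun i => Real.rpow_lt_one_of_one_lt_of_neg (hgt i) (by linarith)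
  rw [← Nat.cofinite_eq_atTop] at hlarge
  exact (eventually_cofinite.mp hlarge).subset fun j hj => not_le.mpr hj.2
end

section
/- Let r > 1 and for each positive integer j set Π_j = (1/(1 + p_j^{-r})) · ∏_{k > j} 1/(1 - p_k^{-r}). If j is such that p_{j+1} ≤ 2^{1/r} p_j, then Π_{j+1} ≤ Π_j. -/
/-- `Pi' r j = (1 + p_j^{-r})⁻¹ · ∏_{k > j} 1/(1 - p_k^{-r})`, `j ≥ 1` (1-indexed primes). -/
noncomputable def Pi' (r : ℝ) (j : ℕ) : ℝ :=
  (1 + (Nat.nth Nat.Prime (j - 1) : ℝ) ^ (-r))⁻¹ * tailProd r j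

/-!
Peeling the factor `(1 - p_{j+1}^{-r})⁻¹` off the tail product gives
`Π_j = (1 + p_j^{-r})⁻¹ (1 - p_{j+1}^{-r})⁻¹ T` and `Π_{j+1} = (1 + p_{j+1}^{-r})⁻¹ T`
with the same nonnegative tail `T`. With `x = p_j^{-r}` and `y = p_{j+1}^{-r}` the
hypothesis says `x ≤ 2y`, and then `(1 + x)(1 - y) ≤ 1 + x - y ≤ 1 + y` settles the
comparison of the leading factors.
-/

open Real

theorem Real.multipliable_inv_one_sub_s8 {ι : Type*} {a : ι → ℝ} (ha : Summable a)
    (h0 : ∀ i, 0 ≤ a i) (h1 : ∀ i, a i < 1) : Multipliable fun i ↦ (1 - a i)⁻¹ := by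
  have hs : Summable fun i ↦ ‖-a i‖ := by simpa [abs_of_nonneg (h0 _)] using ha
  have hprod := multipliable_one_add_of_summable hs
  have hne := tprod_one_add_ne_zero_of_summable (fun i ↦ by linarith [h1 i]) hs
  simp only [← sub_eq_add_neg] at hprod hne
  exact (hprod.hasProd.inv₀ hne).multipliable

theorem Real.rpow_neg_le_two_mul_rpow_neg {p q r : ℝ} (hp : 0 < p) (hq : 0 ≤ q) (hr : 0 < r)
    (h : p ≤ 2 ^ (1 / r) * q) : q ^ (-r) ≤ 2 * p ^ (-r) := by
  have hscale : (2 ^ (1 / r) * q) ^ (-r) = 2⁻¹ * q ^ (-r) := by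
    rw [mul_rpow (by positivity) hq, ← rpow_mul zero_le_two,
      show 1 / r * -r = -1 by field_simp, rpow_neg_one]
  have := rpow_le_rpow_of_nonpos hp h (neg_nonpos.mpr hr.le)
  linarith

theorem inv_one_add_le_inv_one_add_mul_inv_one_sub {x y : ℝ} (hx : 0 ≤ x) (hy : y < 1)
    (hxy : x ≤ 2 * y) : (1 + y)⁻¹ ≤ (1 + x)⁻¹ * (1 - y)⁻¹ := by
  rw [← mul_inv]
  exact inv_anti₀ (mul_pos (by linarith) (by linarith)) (by nlinarith)

section NthPrime

variable {r : ℝ}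

theorem nth_prime_rpow_neg_lt_one (hr : 0 < r) (k : ℕ) : (Nat.nth Nat.Prime k : ℝ) ^ (-r) < 1 :=
  rpow_lt_one_of_one_lt_of_neg (by exact_mod_cast (Nat.prime_nth_prime k).one_lt) (by linarith)

theorem summable_nth_prime_rpow_neg (hr : 1 < r) :
    Summable fun k ↦ (Nat.nth Nat.Prime k : ℝ) ^ (-r) :=
  (summable_nat_rpow.mpr (by linarith)).comp_injective
    (Nat.nth_injective Nat.infinite_setOfPred_prime)

theorem tailProd_nonneg (hr : 0 < r) (j : ℕ) : 0 ≤ tailProd r j :=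
  tprod_nonneg fun _ ↦ inv_nonneg.mpr (sub_nonneg.mpr (nth_prime_rpow_neg_lt_one hr _).le)

theorem tailProd_eq_inv_one_sub_mul_tailProd_succ (hr : 1 < r) (j : ℕ) :
    tailProd r j = (1 - (Nat.nth Nat.Prime j : ℝ) ^ (-r))⁻¹ * tailProd r (j + 1) := by
  have hsum : Summable fun i ↦ (Nat.nth Nat.Prime (j + (i + 1)) : ℝ) ^ (-r) :=
    (summable_nth_prime_rpow_neg hr).comp_injective fun a b hab ↦ by simpa using hab
  have hmul := Real.multipliable_inv_one_sub_s8 hsum (fun _ ↦ rpow_nonneg (Nat.cast_nonneg _) _)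
    (fun _ ↦ nth_prime_rpow_neg_lt_one (by linarith) _)
  rw [tailProd,
    tprod_eq_zero_mul' (f := fun i ↦ (1 - (Nat.nth Nat.Prime (j + i) : ℝ) ^ (-r))⁻¹) hmul,
    add_zero, tailProd]
  exact congrArg _ (tprod_congr fun i ↦ by rw [add_comm i, add_assoc])

end NthPrime

theorem stmt8_general (r : ℝ) (hr : 1 < r) (j : ℕ)
    (h : (Nat.nth Nat.Prime j : ℝ) ≤ 2 ^ (1 / r) * Nat.nth Nat.Prime (j - 1)) :
    Pi' r (j + 1) ≤ Pi' r j := by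
  have hr0 : 0 < r := by linarith
  have hxy := rpow_neg_le_two_mul_rpow_neg
    (by exact_mod_cast (Nat.prime_nth_prime j).pos) (Nat.cast_nonneg _) hr0 h
  rw [Pi', Pi', tailProd_eq_inv_one_sub_mul_tailProd_succ hr j, Nat.add_sub_cancel, ← mul_assoc]
  exact mul_le_mul_of_nonneg_right
    (inv_one_add_le_inv_one_add_mul_inv_one_sub (by positivity)
      (nth_prime_rpow_neg_lt_one hr0 j) hxy)
    (tailProd_nonneg hr0 _)

theorem stmt8 (r : ℝ) (hr : 1 < r) (j : ℕ) (hj : 1 ≤ j)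
    (h : (Nat.nth Nat.Prime j : ℝ) ≤ 2 ^ (1 / r) * Nat.nth Nat.Prime (j - 1)) :
    Pi' r (j + 1) ≤ Pi' r j :=
  stmt8_general r hr j h
end

section
/- Let r > 1 and let j be a positive integer. Writing N_j for the set of positive integers with no prime factor ≤ p_j, the closure of σ_{-r}(N_{j-1}) equals the union over a ∈ ℕ ∪ {∞} of σ_{-r}(p_j^a) · Cl(σ_{-r}(N_j)), where σ_{-r}(p_j^∞) := 1/(1 - p_j^{-r}) and c · X := {c x : x ∈ X}. -/
/-!
Every `n ∈ N_{j-1}` factors as `p_j ^ a * m` with `m ∈ N_j` coprime to `p_j`, and `σ_{-r}` is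
multiplicative, so `σ_{-r}(N_{j-1})` is the union of the scaled copies `c_a · σ_{-r}(N_j)` with
`c_a = σ_{-r}(p_j ^ a)`. These scale factors converge to `L = 1/(1 - p_j^{-r}) ≠ 0`.
If `c_{a_n} s_n → x`, then either some index `a` occurs infinitely often, giving
`x ∈ c_a · Cl(σ_{-r}(N_j))`, or `a_n → ∞`, giving `x ∈ L · Cl(σ_{-r}(N_j))`.
-/

open Filter Topology

noncomputable def sigma' (r : ℝ) (n : ℕ) : ℝ := ∑ d ∈ n.divisors, (d : ℝ) ^ (-r)

/-- `Nset j` is the set of positive integers with no prime factor `≤ p_j`; `Nset 0 = ℕ⁺`. -/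
def Nset (j : ℕ) : Set ℕ := {n | 0 < n ∧ ∀ k < j, ¬ Nat.nth Nat.Prime k ∣ n}

theorem sigma'_mul (r : ℝ) {m n : ℕ} (h : m.Coprime n) :
    sigma' r (m * n) = sigma' r m * sigma' r n := by
  rw [sigma', h.divisors_mul, Finset.sum_map]
  refine (Finset.sum_attach (m.divisors ×ˢ n.divisors)
    (fun p => ((p.1 * p.2 : ℕ) : ℝ) ^ (-r))).trans ?_
  rw [Finset.sum_product, sigma', sigma', Finset.sum_mul_sum]
  refine Finset.sum_congr rfl fun d _ => Finset.sum_congr rfl fun e _ => ?_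
  push_cast
  exact Real.mul_rpow (by positivity) (by positivity)

theorem sigma'_pos (r : ℝ) {n : ℕ} (hn : n ≠ 0) : 0 < sigma' r n :=
  Finset.sum_pos (fun d hd => by have := Nat.pos_of_mem_divisors hd; positivity)
    (Nat.nonempty_divisors.2 hn)

theorem sigma'_prime_pow (r : ℝ) {p : ℕ} (hp : p.Prime) (a : ℕ) :
    sigma' r (p ^ a) = ∑ i ∈ Finset.range (a + 1), ((p : ℝ) ^ (-r)) ^ i := by
  rw [sigma', Nat.sum_divisors_prime_pow hp]
  refine Finset.sum_congr rfl fun i _ => ?_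
  push_cast
  rw [← Real.rpow_natCast, ← Real.rpow_natCast, ← Real.rpow_mul (by positivity),
    ← Real.rpow_mul (by positivity), mul_comm]

theorem tendsto_sigma'_prime_pow {r : ℝ} {p : ℕ} (hp : p.Prime) (hpr : (p : ℝ) ^ (-r) < 1) :
    Tendsto (fun a => sigma' r (p ^ a)) atTop (𝓝 (1 - (p : ℝ) ^ (-r))⁻¹) := by
  simp only [sigma'_prime_pow r hp]
  exact (hasSum_geometric_of_lt_one (by positivity) hpr).tendsto_sum_nat.comp
    (tendsto_add_atTop_nat 1)

theorem mem_Nset_succ {j n : ℕ} :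
    n ∈ Nset (j + 1) ↔ n ∈ Nset j ∧ ¬ Nat.nth Nat.Prime j ∣ n := by
  simp only [Nset, Set.mem_ofPred_eq, Nat.forall_lt_succ_right, and_assoc]

theorem coprime_pow_nth_prime_of_mem_Nset_succ {j m : ℕ} (hm : m ∈ Nset (j + 1)) (a : ℕ) :
    (Nat.nth Nat.Prime j ^ a).Coprime m :=
  .pow_left a ((Nat.prime_nth_prime j).coprime_iff_not_dvd.2 (mem_Nset_succ.1 hm).2)

theorem Nset_eq_iUnion (j : ℕ) :
    Nset j = ⋃ a : ℕ, (fun m => Nat.nth Nat.Prime j ^ a * m) '' Nset (j + 1) := by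
  set p := Nat.nth Nat.Prime j
  have hp : p.Prime := Nat.prime_nth_prime j
  ext n
  simp only [Set.mem_iUnion, Set.mem_image]
  constructor
  · intro hn
    have hm : n / p ^ n.factorization p ∈ Nset (j + 1) :=
      mem_Nset_succ.2 ⟨⟨Nat.ordCompl_pos p hn.1.ne',
        fun k hk hdvd => hn.2 k hk (hdvd.trans (Nat.ordCompl_dvd n p))⟩,
        Nat.not_dvd_ordCompl hp hn.1.ne'⟩
    exact ⟨_, _, hm, Nat.ordProj_mul_ordCompl_eq_self n p⟩
  · rintro ⟨a, m, hm, rfl⟩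
    obtain ⟨⟨hm0, hmk⟩, -⟩ := mem_Nset_succ.1 hm
    refine ⟨Nat.mul_pos (pow_pos hp.pos a) hm0, fun k hk hdvd => ?_⟩
    have hpk := Nat.prime_nth_prime k
    rcases hpk.dvd_mul.1 hdvd with h | h
    · have := (Nat.prime_dvd_prime_iff_eq hpk hp).1 (hpk.dvd_of_dvd_pow h)
      exact hk.ne (Nat.nth_injective Nat.infinite_setOfPred_prime this)
    · exact hmk k hk h

theorem image_sigma'_Nset (r : ℝ) (j : ℕ) :
    sigma' r '' Nset j =
      ⋃ a : ℕ, (fun x => sigma' r (Nat.nth Nat.Prime j ^ a) * x) ''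
        (sigma' r '' Nset (j + 1)) := by
  rw [Nset_eq_iUnion j, Set.image_iUnion]
  refine Set.iUnion_congr fun a => ?_
  rw [Set.image_image, Set.image_image]
  exact Set.image_congr fun m hm => sigma'_mul r (coprime_pow_nth_prime_of_mem_Nset_succ hm a)

theorem frequently_eq_or_tendsto_atTop (a : ℕ → ℕ) :
    (∃ A, ∃ᶠ n in atTop, a n = A) ∨ Tendsto a atTop atTop := by
  by_cases h : ∃ A, ∃ᶠ n in atTop, a n = A
  · exact .inl h
  · push Not at h
    have : Tendsto a atTop cofinite := le_cofinite_iff_compl_singleton_mem.2 h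
    exact .inr (by rwa [Nat.cofinite_eq_atTop] at this)

section ScaledCopies

variable {𝕜 : Type*} [NormedField 𝕜] {S : Set 𝕜}

theorem mem_image_mul_closure_of_tendsto {ι : Type*} {l : Filter ι} [l.NeBot] {d s : ι → 𝕜}
    {D x : 𝕜} (hD : D ≠ 0) (hs : ∀ᶠ i in l, s i ∈ S) (hd : Tendsto d l (𝓝 D))
    (hx : Tendsto (fun i => d i * s i) l (𝓝 x)) : x ∈ (fun y => D * y) '' closure S := by
  refine ⟨x / D, mem_closure_of_tendsto ((hx.div hd hD).congr' ?_) hs, mul_div_cancel₀ x hD⟩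
  filter_upwards [hd.eventually_ne hD] with i hi using mul_div_cancel_left₀ _ hi

theorem closure_iUnion_image_mul {c : ℕ → 𝕜} {L : 𝕜} (hc : ∀ a, c a ≠ 0) (hL : L ≠ 0)
    (hcL : Tendsto c atTop (𝓝 L)) :
    closure (⋃ a, (fun x => c a * x) '' S) =
      (⋃ a, (fun x => c a * x) '' closure S) ∪ (fun x => L * x) '' closure S := by
  have hsub : ∀ a, (fun x => c a * x) '' closure S ⊆ closure (⋃ a, (fun x => c a * x) '' S) :=
    fun a => (image_closure_subset_closure_image (continuous_const_mul (c a))).trans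
      (closure_mono (Set.subset_iUnion (fun a => (fun x => c a * x) '' S) a))
  refine subset_antisymm (fun x hx => ?_) (Set.union_subset (Set.iUnion_subset hsub) ?_)
  · obtain ⟨u, hu, hux⟩ := mem_closure_iff_seq_limit.1 hx
    choose a hu using fun n => Set.mem_iUnion.1 (hu n)
    choose s hs hsu using hu
    replace hux : Tendsto (fun n => c (a n) * s n) atTop (𝓝 x) :=
      hux.congr fun n => (hsu n).symm
    rcases frequently_eq_or_tendsto_atTop a with ⟨A, hA⟩ | ha
    · have := frequently_iff_neBot.1 hA
      have hcA : Tendsto (c ∘ a) (atTop ⊓ 𝓟 {n | a n = A}) (𝓝 (c A)) :=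
        tendsto_const_nhds.congr' (eventually_inf_principal.2 (.of_forall fun n hn =>
          congrArg c (Eq.symm hn)))
      exact Or.inl (Set.mem_iUnion.2 ⟨A, mem_image_mul_closure_of_tendsto (hc A)
        ((Eventually.of_forall hs).filter_mono inf_le_left) hcA (hux.mono_left inf_le_left)⟩)
    · exact Or.inr (mem_image_mul_closure_of_tendsto hL (.of_forall hs) (hcL.comp ha) hux)
  · rintro _ ⟨y, hy, rfl⟩
    exact isClosed_closure.mem_of_tendsto (hcL.mul_const y)
      (.of_forall fun a => hsub a ⟨y, hy, rfl⟩)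

end ScaledCopies

theorem stmt11 (r : ℝ) (hr : 1 < r) (j : ℕ) (hj : 1 ≤ j) :
    closure (sigma' r '' Nset (j - 1)) =
      (⋃ a : ℕ, (fun x => sigma' r (Nat.nth Nat.Prime (j - 1) ^ a) * x) ''
          closure (sigma' r '' Nset j)) ∪
        ((fun x => (1 - (Nat.nth Nat.Prime (j - 1) : ℝ) ^ (-r))⁻¹ * x) ''
          closure (sigma' r '' Nset j)) := by
  obtain ⟨i, rfl⟩ : ∃ i, j = i + 1 := ⟨j - 1, by omega⟩
  rw [Nat.add_sub_cancel]
  have hp := Nat.prime_nth_prime i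
  have hpr : (Nat.nth Nat.Prime i : ℝ) ^ (-r) < 1 :=
    Real.rpow_lt_one_of_one_lt_of_neg (by exact_mod_cast hp.one_lt) (by linarith)
  rw [image_sigma'_Nset, closure_iUnion_image_mul
    (fun a => (sigma'_pos r (pow_ne_zero a hp.ne_zero)).ne')
    (inv_ne_zero (sub_pos.2 hpr).ne') (tendsto_sigma'_prime_pow hp hpr)]
end
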